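/- For all integers n ≥ 3 and 0 ≤ i ≤ n−2, the number of tuples (x_1,…,x_{n−1}, y_1,…,y_{n−2}) of nonnegative integers satisfying x_1 + y_1 = n − 2 − i and x_d + y_{d−1} + y_d = n − 1 − d for each 2 ≤ d ≤ n−1 (with the convention y_{n−1} = 0) equals the number of down-up alternating permutations (w_1,…,w_n) of {1,…,n} with first entry w_1 = n − i. -/
import Mathlib

/-- A sequence `w` is down-up alternating if `w 0 > w 1 < w 2 > w 3 < ⋯`. -/
def DownUp {m : ℕ} (w : Fin m → Fin m) : Prop :=
  ∀ i : ℕ, ∀ h : i + 1 < m,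
    if i % 2 = 0 then w ⟨i + 1, h⟩ < w ⟨i, Nat.lt_of_succ_lt h⟩
    else w ⟨i, Nat.lt_of_succ_lt h⟩ < w ⟨i + 1, h⟩

set_option linter.unusedVariables false

def rel (n v x : ℕ) : ℕ := if x < v then n - x else n + 1 - x
def unrel (n v y : ℕ) : ℕ := if v < n + 1 - y then n + 1 - y else n - y

lemma rel_le {n v x : ℕ} (hx : x ≤ n + 1) (hxv : x ≠ v) (hv : v ≤ n + 1) : rel n v x ≤ n := by
  unfold rel; split_ifs <;> omega
lemma unrel_le {n v y : ℕ} (hy : y ≤ n) : unrel n v y ≤ n + 1 := by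
  unfold unrel; split_ifs <;> omega
lemma unrel_ne {n v y : ℕ} (hy : y ≤ n) (hv : v ≤ n + 1) : unrel n v y ≠ v := by
  unfold unrel; split_ifs <;> omega
lemma unrel_rel {n v x : ℕ} (hx : x ≤ n + 1) (hxv : x ≠ v) (hv : v ≤ n + 1) :
    unrel n v (rel n v x) = x := by
  unfold rel unrel; split_ifs <;> omega
lemma rel_unrel {n v y : ℕ} (hy : y ≤ n) (hv : v ≤ n + 1) : rel n v (unrel n v y) = y := by
  unfold rel unrel; split_ifs <;> omega
lemma unrel_lt_unrel {n v y1 y2 : ℕ} (h1 : y1 ≤ n) (h2 : y2 ≤ n) (hv : v ≤ n + 1) :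
    unrel n v y2 < unrel n v y1 ↔ y1 < y2 := by
  unfold unrel; split_ifs <;> omega
lemma rel_lt_rel {n v x1 x2 : ℕ} (h1 : x1 ≤ n + 1) (h2 : x2 ≤ n + 1) (hn1 : x1 ≠ v)
    (hn2 : x2 ≠ v) (hv : v ≤ n + 1) : rel n v x2 < rel n v x1 ↔ x1 < x2 := by
  unfold rel; split_ifs <;> omega
lemma unrel_sub {n v t : ℕ} (ht : t < v) (hv : v ≤ n + 1) : unrel n v (n - t) = t := by
  unfold unrel; split_ifs <;> omega
lemma rel_of_lt {n v x : ℕ} (h : x < v) : rel n v x = n - x := if_pos h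

def mkBig (n v : ℕ) (hv : v ≤ n + 1) (w' : Fin (n+1) → Fin (n+1)) : Fin (n+2) → Fin (n+2) :=
  fun j => if h : (j : ℕ) = 0 then ⟨v, by omega⟩ else
    ⟨unrel n v (w' ⟨(j : ℕ) - 1, by omega⟩),
      by have := unrel_le (n := n) (v := v) (w' ⟨(j : ℕ) - 1, by omega⟩).is_le; omega⟩

lemma mkBig_zero {n v : ℕ} (hv : v ≤ n + 1) (w' : Fin (n+1) → Fin (n+1)) (h0 : (0:ℕ) < n+2) :
    (mkBig n v hv w' ⟨0, h0⟩ : ℕ) = v := by simp [mkBig]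

lemma mkBig_succ {n v : ℕ} (hv : v ≤ n + 1) (w' : Fin (n+1) → Fin (n+1)) (j : ℕ)
    (hj : j + 1 < n + 2) :
    (mkBig n v hv w' ⟨j+1, hj⟩ : ℕ) = unrel n v (w' ⟨j, by omega⟩) := by simp [mkBig]

lemma mkBig_bij {n v : ℕ} (hv : v ≤ n + 1) (w' : Fin (n+1) → Fin (n+1))
    (hw' : Function.Bijective w') : Function.Bijective (mkBig n v hv w') := by
  rw [Finite.injective_iff_bijective.symm]
  rintro ⟨a, ha⟩ ⟨b, hb⟩ hab
  have hval := congrArg Fin.val hab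
  by_cases haz : a = 0 <;> by_cases hbz : b = 0
  · simp only [Fin.mk.injEq]; omega
  · exfalso
    subst haz
    rw [mkBig_zero] at hval
    obtain ⟨b', rfl⟩ : ∃ b', b = b' + 1 := ⟨b - 1, by omega⟩
    rw [mkBig_succ] at hval
    exact unrel_ne (w' ⟨b', by omega⟩).is_le hv hval.symm
  · exfalso
    subst hbz
    rw [mkBig_zero] at hval
    obtain ⟨a', rfl⟩ : ∃ a', a = a' + 1 := ⟨a - 1, by omega⟩
    rw [mkBig_succ] at hval
    exact unrel_ne (w' ⟨a', by omega⟩).is_le hv hval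
  · obtain ⟨a', rfl⟩ : ∃ a', a = a' + 1 := ⟨a - 1, by omega⟩
    obtain ⟨b', rfl⟩ : ∃ b', b = b' + 1 := ⟨b - 1, by omega⟩
    rw [mkBig_succ, mkBig_succ] at hval
    have h2 : rel n v (unrel n v (w' ⟨a', by omega⟩)) =
        rel n v (unrel n v (w' ⟨b', by omega⟩)) := by rw [hval]
    rw [rel_unrel (w' _).is_le hv, rel_unrel (w' _).is_le hv] at h2
    have := hw'.1 (Fin.ext h2)
    have : a' = b' := congrArg Fin.val this
    simp only [Fin.mk.injEq]; omega

lemma mkBig_downUp {n v t : ℕ} (hv : v ≤ n + 1) (ht : t < v) (w' : Fin (n+1) → Fin (n+1))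
    (hd : DownUp w') (h0 : (w' ⟨0, by omega⟩ : ℕ) = n - t) : DownUp (mkBig n v hv w') := by
  intro i h
  rcases i with _ | k
  · simp only [Nat.zero_mod, if_pos rfl]
    rw [Fin.lt_def, mkBig_zero, mkBig_succ, h0, unrel_sub ht hv]
    exact ht
  · have hk : k + 1 < n + 1 := by omega
    have hd' := hd k hk
    have e1 : (mkBig n v hv w' ⟨k+1, Nat.lt_of_succ_lt h⟩ : ℕ) = unrel n v (w' ⟨k, by omega⟩) :=
      mkBig_succ hv w' k _
    have e2 : (mkBig n v hv w' ⟨k+1+1, h⟩ : ℕ) = unrel n v (w' ⟨k+1, by omega⟩) :=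
      mkBig_succ hv w' (k+1) _
    by_cases hp : k % 2 = 0
    · have hp2 : (k + 1) % 2 ≠ 0 := by omega
      rw [if_neg hp2, Fin.lt_def, e1, e2,
        unrel_lt_unrel (w' _).is_le (w' _).is_le hv]
      rw [if_pos hp] at hd'
      exact hd'
    · have hp2 : (k + 1) % 2 = 0 := by omega
      rw [if_pos hp2, Fin.lt_def, e1, e2,
        unrel_lt_unrel (w' _).is_le (w' _).is_le hv]
      rw [if_neg hp] at hd'
      exact hd'

section Small
variable {n v : ℕ}

/-- reduction of a big permutation -/
def mkSmall (n v : ℕ) (hv : v ≤ n + 1) (w : Fin (n+2) → Fin (n+2))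
    (hne : ∀ j : Fin (n+1), (w ⟨(j:ℕ)+1, by omega⟩ : ℕ) ≠ v) : Fin (n+1) → Fin (n+1) :=
  fun j =>
    have hj : (j:ℕ)+1 < n+2 := by omega
    ⟨rel n v (w ⟨(j:ℕ)+1, hj⟩),
      Nat.lt_succ_of_le (rel_le (w ⟨(j:ℕ)+1, hj⟩).is_le (hne j) hv)⟩

lemma mkSmall_bij (hv : v ≤ n + 1) (w : Fin (n+2) → Fin (n+2)) (hne : ∀ j : Fin (n+1), (w ⟨(j:ℕ)+1, by omega⟩ : ℕ) ≠ v)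
    (hw : Function.Bijective w) : Function.Bijective (mkSmall n v hv w hne) := by
  rw [Finite.injective_iff_bijective.symm]
  intro a b hab
  have hval := congrArg Fin.val hab
  simp only [mkSmall] at hval
  have h2 : unrel n v (rel n v (w ⟨(a:ℕ)+1, by omega⟩)) =
      unrel n v (rel n v (w ⟨(b:ℕ)+1, by omega⟩)) := by rw [hval]
  rw [unrel_rel (w _).is_le (hne a) hv, unrel_rel (w _).is_le (hne b) hv] at h2
  have := congrArg Fin.val (hw.1 (Fin.ext h2))
  simp only [Fin.mk.injEq] at this ⊢
  omega

lemma mkSmall_downUp (hv : v ≤ n + 1) (w : Fin (n+2) → Fin (n+2)) (hne : ∀ j : Fin (n+1), (w ⟨(j:ℕ)+1, by omega⟩ : ℕ) ≠ v)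
    (hd : DownUp w) : DownUp (mkSmall n v hv w hne) := by
  intro i h
  have hd' := hd (i+1) (by omega)
  have e1 : (mkSmall n v hv w hne ⟨i, Nat.lt_of_succ_lt h⟩ : ℕ) =
      rel n v (w ⟨i+1, by omega⟩) := rfl
  have e2 : (mkSmall n v hv w hne ⟨i+1, h⟩ : ℕ) = rel n v (w ⟨i+1+1, by omega⟩) := rfl
  by_cases hp : i % 2 = 0
  · have hp2 : (i+1) % 2 ≠ 0 := by omega
    rw [if_neg hp2] at hd'
    rw [if_pos hp, Fin.lt_def, e1, e2, rel_lt_rel (w _).is_le (w _).is_le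
      (hne ⟨i, by omega⟩) (hne ⟨i+1, by omega⟩) hv]
    exact hd'
  · have hp2 : (i+1) % 2 = 0 := by omega
    rw [if_pos hp2] at hd'
    rw [if_neg hp, Fin.lt_def, e1, e2]
    rw [Fin.lt_def] at hd'
    have := (rel_lt_rel (n := n) (v := v) (w ⟨i+1+1, by omega⟩).is_le (w ⟨i+1, by omega⟩).is_le
      (hne ⟨i+1, by omega⟩) (hne ⟨i, by omega⟩) hv).2 hd'
    exact this

end Small

lemma nat_card_sigma {ι : Type*} [Fintype ι] (β : ι → Type*) [∀ i, Finite (β i)] :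
    Nat.card (Σ i, β i) = ∑ i, Nat.card (β i) := by
  letI : ∀ i, Fintype (β i) := fun i => Fintype.ofFinite _
  simp [Nat.card_eq_fintype_card, Fintype.card_sigma]

set_option maxHeartbeats 2000000 in
lemma perm_step (n v : ℕ) (hv : v ≤ n + 1) :
    Nat.card {w : Fin (n+2) → Fin (n+2) //
      Function.Bijective w ∧ DownUp w ∧ ((w ⟨0, by omega⟩ : ℕ) = v)} =
    ∑ t ∈ Finset.range v, Nat.card {w : Fin (n+1) → Fin (n+1) //
      Function.Bijective w ∧ DownUp w ∧ ((w ⟨0, by omega⟩ : ℕ) = n - t)} := by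
  set β : ℕ → Type := fun t => {w : Fin (n+1) → Fin (n+1) //
      Function.Bijective w ∧ DownUp w ∧ ((w ⟨0, by omega⟩ : ℕ) = n - t)} with hβ
  have key : Nat.card (Σ t : Fin v, β (t:ℕ)) =
      Nat.card {w : Fin (n+2) → Fin (n+2) //
        Function.Bijective w ∧ DownUp w ∧ ((w ⟨0, by omega⟩ : ℕ) = v)} := by
    apply Nat.card_eq_of_bijective
      (f := fun p => ⟨mkBig n v hv p.2.1,
        mkBig_bij hv p.2.1 p.2.2.1,
        mkBig_downUp hv p.1.isLt p.2.1 p.2.2.2.1 p.2.2.2.2,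
        mkBig_zero hv p.2.1 (by omega)⟩)
    constructor
    · rintro ⟨⟨t1, ht1⟩, ⟨w1, hw1⟩⟩ ⟨⟨t2, ht2⟩, ⟨w2, hw2⟩⟩ h
      have hfun := congrArg Subtype.val h
      simp only at hfun
      have hw : w1 = w2 := by
        funext j
        have := congrArg (fun f => (f ⟨(j:ℕ)+1, by omega⟩ : ℕ)) hfun
        rw [mkBig_succ, mkBig_succ] at this
        have h2 : rel n v (unrel n v (w1 ⟨(j:ℕ), by omega⟩)) =
            rel n v (unrel n v (w2 ⟨(j:ℕ), by omega⟩)) := by rw [this]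
        rw [rel_unrel (w1 _).is_le hv, rel_unrel (w2 _).is_le hv] at h2
        exact Fin.ext (by simpa using h2)
      have ht : t1 = t2 := by
        have e1 : (w1 ⟨0, by omega⟩ : ℕ) = n - t1 := hw1.2.2
        have e2 : (w2 ⟨0, by omega⟩ : ℕ) = n - t2 := hw2.2.2
        rw [hw] at e1
        omega
      subst ht
      subst hw
      rfl
    · rintro ⟨w, hb, hd, h0⟩
      have hne : ∀ j : Fin (n+1), (w ⟨(j:ℕ)+1, by omega⟩ : ℕ) ≠ v := by
        intro j hj
        have : w ⟨(j:ℕ)+1, by omega⟩ = w ⟨0, by omega⟩ := Fin.ext (by rw [hj, h0])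
        have := congrArg Fin.val (hb.1 this)
        simp at this
      have ht : (w ⟨1, by omega⟩ : ℕ) < v := by
        have := hd 0 (by omega)
        rw [if_pos rfl, Fin.lt_def, h0] at this
        exact this
      refine ⟨⟨⟨(w ⟨1, by omega⟩ : ℕ), ht⟩,
        ⟨mkSmall n v hv w hne, mkSmall_bij hv w hne hb, mkSmall_downUp hv w hne hd, ?_⟩⟩, ?_⟩
      · show rel n v (w ⟨0+1, by omega⟩ : ℕ) = n - (w ⟨1, by omega⟩ : ℕ)
        rw [rel_of_lt (by exact ht)]
      · apply Subtype.ext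
        funext j
        rcases j with ⟨jv, hj⟩
        apply Fin.ext
        match jv, hj with
        | 0, hj => rw [mkBig_zero]; exact h0.symm
        | (k+1), hj =>
          rw [mkBig_succ]
          show unrel n v (rel n v (w ⟨k+1, by omega⟩ : ℕ)) = _
          rw [unrel_rel (w _).is_le (hne ⟨k, by omega⟩) hv]
  rw [← key, nat_card_sigma]
  exact Fin.sum_univ_eq_sum_range (fun t => Nat.card (β t)) v

def Ent : ℕ → ℕ → ℕ
  | 0, _ => 0
  | 1, v => if v = 0 then 1 else 0
  | (n+2), v => ∑ t ∈ Finset.range v, Ent (n+1) (n - t)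

lemma Ent_zero (n : ℕ) (h : 2 ≤ n) : Ent n 0 = 0 := by
  obtain ⟨m, rfl⟩ : ∃ m, n = m + 2 := ⟨n - 2, by omega⟩
  simp [Ent]

lemma Pcard : ∀ n v : ℕ, v ≤ n →
    Nat.card {w : Fin (n+1) → Fin (n+1) //
      Function.Bijective w ∧ DownUp w ∧ ((w ⟨0, by omega⟩ : ℕ) = v)} = Ent (n+1) v := by
  intro n
  induction n with
  | zero =>
    intro v hv
    interval_cases v
    have hu : Unique {w : Fin 1 → Fin 1 //
        Function.Bijective w ∧ DownUp w ∧ ((w ⟨0, by omega⟩ : ℕ) = 0)} := by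
      refine ⟨⟨⟨fun _ => ⟨0, by omega⟩, ?_, ?_, rfl⟩⟩, ?_⟩
      · exact ⟨fun a b _ => Subsingleton.elim a b, fun y => ⟨y, Subsingleton.elim _ _⟩⟩
      · intro i h; omega
      · intro w
        apply Subtype.ext
        funext j
        exact Subsingleton.elim _ _
    rw [Nat.card_unique]
    simp [Ent]
  | succ m ih =>
    intro v hv
    rw [perm_step m v hv]
    show _ = Ent (m + 2) v
    rw [Ent]
    exact Finset.sum_congr rfl (fun t htm => ih (m - t) (by omega))

/-- The `y`-sequence sets -/
def YT (m b : ℕ) : Type := {y : Fin (m+1) → ℕ //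
  y ⟨0, by omega⟩ ≤ b ∧
  (∀ d : ℕ, ∀ h : d + 1 < m + 1, y ⟨d, by omega⟩ + y ⟨d+1, h⟩ ≤ m - d) ∧
  y ⟨m, by omega⟩ = 0}

lemma YT_bound {m b : ℕ} (y : Fin (m+1) → ℕ)
    (h0 : y ⟨0, by omega⟩ ≤ b)
    (hp : ∀ d : ℕ, ∀ h : d + 1 < m + 1, y ⟨d, by omega⟩ + y ⟨d+1, h⟩ ≤ m - d)
    (hl : y ⟨m, by omega⟩ = 0) (d : Fin (m + 1)) : y d ≤ b + m := by
  rcases d with ⟨d, hd⟩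
  by_cases hd0 : d = 0
  · subst hd0
    have : y ⟨0, hd⟩ ≤ b := h0
    omega
  by_cases hdm : d = m
  · subst hdm
    have : y ⟨d, hd⟩ = 0 := hl
    omega
  · have hlt : d + 1 < m + 1 := by omega
    have h1 : y ⟨d, hd⟩ + y ⟨d+1, hlt⟩ ≤ m - d := hp d hlt
    omega

instance YT_finite (m b : ℕ) : Finite (YT m b) := by
  apply Finite.of_injective (β := Fin (m+1) → Fin (b+m+1))
    (f := fun y => fun d => ⟨y.1 d, by
      have := YT_bound y.1 y.2.1 y.2.2.1 y.2.2.2 d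
      omega⟩)
  intro y1 y2 h
  apply Subtype.ext
  funext d
  have := congrArg (fun f => (f d : ℕ)) h
  simpa using this

lemma Ysplit (m b : ℕ) :
    Nat.card (YT (m+1) b) = ∑ t ∈ Finset.range (b+1),
      Nat.card {y : YT (m+1) b // y.1 ⟨0, by omega⟩ = t} := by
  have key : Nat.card (Σ t : Fin (b+1), {y : YT (m+1) b // y.1 ⟨0, by omega⟩ = (t:ℕ)}) =
      Nat.card (YT (m+1) b) := by
    apply Nat.card_eq_of_bijective (f := fun p => p.2.1)
    constructor
    · rintro ⟨t1, y1, hy1⟩ ⟨t2, y2, hy2⟩ h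
      simp only at h
      have ht : t1 = t2 := Fin.ext (by rw [← hy1, ← hy2, h])
      subst ht
      exact congrArg _ (Subtype.ext h)
    · intro y
      have hb0 : y.1 ⟨0, by omega⟩ ≤ b := y.2.1
      exact ⟨⟨⟨y.1 ⟨0, by omega⟩, by omega⟩, ⟨y, rfl⟩⟩, rfl⟩
  rw [← key, nat_card_sigma]
  exact Fin.sum_univ_eq_sum_range
    (fun t => Nat.card {y : YT (m+1) b // y.1 ⟨0, by omega⟩ = t}) (b+1)

lemma Ybucket_empty (m b t : ℕ) (ht : m + 1 < t) :
    Nat.card {y : YT (m+1) b // y.1 ⟨0, by omega⟩ = t} = 0 := by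
  rw [Nat.card_eq_zero]
  left
  constructor
  rintro ⟨y, hy0⟩
  have hp := y.2.2.1 0 (by omega)
  omega

def bucketFun (m b t : ℕ) (ht : t ≤ m + 1) (htb : t ≤ b) (z : YT m (m + 1 - t)) :
    {y : YT (m+1) b // y.1 ⟨0, by omega⟩ = t} :=
  ⟨⟨fun j => if h : (j:ℕ) = 0 then t else z.1 ⟨(j:ℕ) - 1, by omega⟩, by
    exact le_trans (le_of_eq (dif_pos rfl)) htb, by
    intro d h
    by_cases hd0 : d = 0
    · subst hd0
      show (if h : (0:ℕ) = 0 then t else _) +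
        (if h : (1:ℕ) = 0 then t else z.1 ⟨1 - 1, by omega⟩) ≤ m + 1 - 0
      rw [dif_pos rfl, dif_neg (by omega)]
      have hz0 : z.1 ⟨1 - 1, by omega⟩ ≤ m + 1 - t := z.2.1
      omega
    · obtain ⟨k, rfl⟩ : ∃ k, d = k + 1 := ⟨d - 1, by omega⟩
      show (if h : (k+1:ℕ) = 0 then t else z.1 ⟨k + 1 - 1, by omega⟩) +
        (if h : (k+2:ℕ) = 0 then t else z.1 ⟨k + 2 - 1, by omega⟩) ≤ m + 1 - (k + 1)
      rw [dif_neg (by omega), dif_neg (by omega)]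
      have hz := z.2.2.1 k (by omega)
      have e1 : ∀ hh : k + 1 - 1 < m + 1, (⟨k + 1 - 1, hh⟩ : Fin (m+1)) = ⟨k, by omega⟩ :=
        fun hh => Fin.ext (show k + 1 - 1 = k by omega)
      have e2 : ∀ hh : k + 2 - 1 < m + 1, (⟨k + 2 - 1, hh⟩ : Fin (m+1)) = ⟨k + 1, by omega⟩ :=
        fun hh => Fin.ext (show k + 2 - 1 = k + 1 by omega)
      rw [e1, e2]
      omega, by
    show (if h : (m+1:ℕ) = 0 then t else z.1 ⟨m + 1 - 1, by omega⟩) = 0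
    rw [dif_neg (by omega)]
    have hz := z.2.2.2
    have e : ∀ hh : m + 1 - 1 < m + 1, (⟨m + 1 - 1, hh⟩ : Fin (m+1)) = ⟨m, by omega⟩ :=
      fun hh => Fin.ext (show m + 1 - 1 = m by omega)
    rw [e]
    exact hz⟩, by simp⟩

lemma Ybucket (m b t : ℕ) (ht : t ≤ m + 1) (htb : t ≤ b) :
    Nat.card {y : YT (m+1) b // y.1 ⟨0, by omega⟩ = t} = Nat.card (YT m (m + 1 - t)) := by
  symm
  apply Nat.card_eq_of_bijective (f := bucketFun m b t ht htb)
  constructor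
  · rintro ⟨z1, hz1⟩ ⟨z2, hz2⟩ h
    apply Subtype.ext
    funext j
    have h2 := congrArg (fun q => q.1.1 ⟨(j:ℕ) + 1, by omega⟩) h
    simp only [bucketFun] at h2
    rw [dif_neg (by omega), dif_neg (by omega)] at h2
    have e : ∀ (hh : (j:ℕ) + 1 - 1 < m + 1), (⟨(j:ℕ) + 1 - 1, hh⟩ : Fin (m+1)) = j :=
      fun hh => Fin.ext (show (j:ℕ) + 1 - 1 = (j:ℕ) by omega)
    rw [e] at h2
    exact h2
  · rintro ⟨⟨y, h0, hp, hl⟩, hy0⟩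
    have hy0' : y ⟨0, by omega⟩ = t := hy0
    refine ⟨⟨fun j => y ⟨(j:ℕ) + 1, by omega⟩, ?_, ?_, ?_⟩, ?_⟩
    · show y ⟨0 + 1, by omega⟩ ≤ m + 1 - t
      have := hp 0 (by omega)
      omega
    · intro d h
      show y ⟨d + 1, by omega⟩ + y ⟨d + 1 + 1, by omega⟩ ≤ m - d
      have := hp (d+1) (by omega)
      omega
    · show y ⟨m + 1, by omega⟩ = 0
      exact hl
    · apply Subtype.ext
      apply Subtype.ext
      funext j
      show (if h : (j:ℕ) = 0 then t else y ⟨(j:ℕ) - 1 + 1, by omega⟩) = y j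
      rcases j with ⟨jv, hj⟩
      by_cases hj0 : jv = 0
      · subst hj0
        rw [dif_pos rfl]
        exact hy0'.symm
      · rw [dif_neg hj0]
        congr 1
        exact Fin.ext (show jv - 1 + 1 = jv by omega)

lemma Ent_succ (n v : ℕ) : Ent (n+2) v = ∑ t ∈ Finset.range v, Ent (n+1) (n - t) := by
  rw [Ent]

lemma Ycard : ∀ m i : ℕ, i ≤ m + 1 → Nat.card (YT m (m + 1 - i)) = Ent (m + 3) (m + 2 - i) := by
  intro m
  induction m with
  | zero =>
    intro i hi
    have hu : Unique (YT 0 (0 + 1 - i)) := by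
      refine ⟨⟨⟨fun _ => 0, Nat.zero_le _, fun d h => absurd h (by omega), rfl⟩⟩, ?_⟩
      intro y
      apply Subtype.ext
      funext j
      show y.1 j = 0
      have hj : j = ⟨0, by omega⟩ := Fin.ext (show (j:ℕ) = 0 by have := j.isLt; omega)
      rw [hj]
      exact y.2.2.2
    haveI := hu
    rw [Nat.card_unique]
    show 1 = Ent 3 (2 - i)
    interval_cases i <;> decide
  | succ m ih =>
    intro i hi
    show Nat.card (YT (m+1) (m+2-i)) = Ent (m+2+2) (m+3-i)
    rw [Ent_succ, Ysplit]
    rw [show m + 2 - i + 1 = m + 3 - i by omega]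
    apply Finset.sum_congr rfl
    intro t htm
    rw [Finset.mem_range] at htm
    by_cases htt : t ≤ m + 1
    · have h1 := Ybucket m (m+2-i) t htt (by omega)
      have h2 : Nat.card (YT m (m + 1 - t)) = Ent (m + 3) (m + 2 - t) := ih t htt
      rw [h1, h2]
    · have h1 := Ybucket_empty m (m+2-i) t (by omega)
      rw [h1, show m + 2 - t = 0 by omega, Ent_zero _ (by omega)]

def mkX (m i : ℕ) (y : Fin (m+1) → ℕ) : Fin (m+2) → ℕ := fun j =>
  if h0 : (j:ℕ) = 0 then (m+1-i) - y ⟨0, by omega⟩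
  else if hm : (j:ℕ) = m+1 then 0
  else (m+1-(j:ℕ)) - (y ⟨(j:ℕ)-1, by have := j.isLt; omega⟩ + y ⟨(j:ℕ), by have := j.isLt; omega⟩)

lemma mkX_zero {m i : ℕ} (y : Fin (m+1) → ℕ) (h : (0:ℕ) < m+2) :
    mkX m i y ⟨0, h⟩ = (m+1-i) - y ⟨0, by omega⟩ := by simp [mkX]

lemma mkX_last {m i : ℕ} (y : Fin (m+1) → ℕ) (h : m+1 < m+2) :
    mkX m i y ⟨m+1, h⟩ = 0 := by
  unfold mkX
  rw [dif_neg (show ¬((m+1:ℕ) = 0) by omega), dif_pos (show (m+1:ℕ) = m+1 from rfl)]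

lemma mkX_mid {m i : ℕ} (y : Fin (m+1) → ℕ) (j : ℕ) (h1 : 1 ≤ j) (h2 : j ≤ m) (hh : j < m+2) :
    mkX m i y ⟨j, hh⟩ = (m+1-j) - (y ⟨j-1, by omega⟩ + y ⟨j, by omega⟩) := by
  unfold mkX
  rw [dif_neg (show ¬(j = 0) by omega), dif_neg (show ¬(j = m+1) by omega)]

def toLHS (m i : ℕ) (y : YT m (m + 1 - i)) :
    {p : (Fin (m + 3 - 1) → ℕ) × (Fin (m + 3 - 2) → ℕ) //
      (p.1 ⟨0, by omega⟩ + p.2 ⟨0, by omega⟩ = m + 3 - 2 - i) ∧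
      (∀ d : ℕ, ∀ _h1 : 2 ≤ d, ∀ _h2 : d ≤ m + 3 - 2,
        p.1 ⟨d - 1, by omega⟩ + p.2 ⟨d - 2, by omega⟩ + p.2 ⟨d - 1, by omega⟩ = m + 3 - 1 - d) ∧
      (p.1 ⟨m + 3 - 2, by omega⟩ + p.2 ⟨m + 3 - 3, by omega⟩ = 0)} :=
  ⟨⟨mkX m i y.1, y.1⟩, by
    show mkX m i y.1 ⟨0, by omega⟩ + y.1 ⟨0, by omega⟩ = m + 1 - i
    have e := mkX_zero (i := i) y.1 (by omega)
    have h0 := y.2.1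
    omega, by
    intro d hd1 hd2
    have hd2' : d ≤ m + 1 := hd2
    show mkX m i y.1 ⟨d - 1, by omega⟩ + y.1 ⟨d - 2, by omega⟩ + y.1 ⟨d - 1, by omega⟩
        = m + 2 - d
    have e : mkX m i y.1 ⟨d - 1, by omega⟩ =
        (m + 1 - (d - 1)) - (y.1 ⟨d - 2, by omega⟩ + y.1 ⟨d - 1, by omega⟩) := by
      have e0 := mkX_mid (i := i) y.1 (d - 1) (by omega) (by omega) (by omega)
      have e2 : (⟨d - 1 - 1, by omega⟩ : Fin (m+1)) = ⟨d - 2, by omega⟩ :=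
        Fin.ext (show d - 1 - 1 = d - 2 by omega)
      rw [e2] at e0
      exact e0
    have h4 : y.1 ⟨d - 2, by omega⟩ + y.1 ⟨d - 2 + 1, by omega⟩ ≤ m - (d - 2) :=
      y.2.2.1 (d - 2) (by omega)
    have e2 : (⟨d - 2 + 1, by omega⟩ : Fin (m+1)) = ⟨d - 1, by omega⟩ :=
      Fin.ext (show d - 2 + 1 = d - 1 by omega)
    rw [e2] at h4
    omega, by
    show mkX m i y.1 ⟨m + 1, by omega⟩ + y.1 ⟨m, by omega⟩ = 0
    have e := mkX_last (i := i) y.1 (by omega)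
    have hl := y.2.2.2
    omega⟩

set_option maxHeartbeats 2000000 in
lemma LHS_card (m i : ℕ) (hi' : i ≤ m + 1) : Nat.card {p : (Fin (m + 3 - 1) → ℕ) × (Fin (m + 3 - 2) → ℕ) //
    (p.1 ⟨0, by omega⟩ + p.2 ⟨0, by omega⟩ = m + 3 - 2 - i) ∧
    (∀ d : ℕ, ∀ _h1 : 2 ≤ d, ∀ _h2 : d ≤ m + 3 - 2,
      p.1 ⟨d - 1, by omega⟩ + p.2 ⟨d - 2, by omega⟩ + p.2 ⟨d - 1, by omega⟩ = m + 3 - 1 - d) ∧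
    (p.1 ⟨m + 3 - 2, by omega⟩ + p.2 ⟨m + 3 - 3, by omega⟩ = 0)} =
    Nat.card (YT m (m + 1 - i)) := by
  symm
  apply Nat.card_eq_of_bijective (f := toLHS m i)
  constructor
  · intro y1 y2 h
    have h2 : y1.1 = y2.1 := congrArg (fun q => q.1.2) h
    exact Subtype.ext h2
  · rintro ⟨⟨x, y⟩, hc1, hc2, hc3⟩
    have hc1' : x ⟨0, by omega⟩ + y ⟨0, by omega⟩ = m + 1 - i := hc1
    have hc2' : ∀ d : ℕ, ∀ _ha : 2 ≤ d, ∀ _hb : d ≤ m + 1,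
        x ⟨d - 1, by omega⟩ + y ⟨d - 2, by omega⟩ + y ⟨d - 1, by omega⟩ = m + 2 - d := hc2
    have hc3' : x ⟨m + 1, by omega⟩ + y ⟨m, by omega⟩ = 0 := hc3
    have hy0 : y ⟨0, by omega⟩ ≤ m + 1 - i := by omega
    have hyp : ∀ d : ℕ, ∀ h : d + 1 < m + 1, y ⟨d, by omega⟩ + y ⟨d+1, h⟩ ≤ m - d := by
      intro d h
      have h2 : x ⟨d + 1, by omega⟩ + y ⟨d, by omega⟩ + y ⟨d + 1, by omega⟩ = m + 2 - (d + 2) :=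
        hc2' (d + 2) (by omega) (by omega)
      omega
    have hyl : y ⟨m, by omega⟩ = 0 := by omega
    refine ⟨⟨y, hy0, hyp, hyl⟩, ?_⟩
    apply Subtype.ext
    show (mkX m i y, y) = (x, y)
    refine Prod.ext ?_ rfl
    show mkX m i y = x
    funext j
    rcases j with ⟨jv, hj⟩
    by_cases hj0 : jv = 0
    · subst hj0
      have e := mkX_zero (i := i) y (by omega)
      omega
    by_cases hjm : jv = m + 1
    · subst hjm
      have e := mkX_last (i := i) y (by omega)
      omega
    · have e : mkX m i y ⟨jv, hj⟩ =
          (m + 1 - jv) - (y ⟨jv - 1, by omega⟩ + y ⟨jv, by omega⟩) :=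
        mkX_mid y jv (by omega) (by omega) hj
      have h2 : x ⟨jv, by omega⟩ + y ⟨jv - 1, by omega⟩ + y ⟨jv, by omega⟩
          = m + 2 - (jv + 1) := hc2' (jv + 1) (by omega) (by omega)
      have h3 : y ⟨jv - 1, by omega⟩ + y ⟨jv - 1 + 1, by omega⟩ ≤ m - (jv - 1) :=
        hyp (jv - 1) (by omega)
      have e2 : (⟨jv - 1 + 1, by omega⟩ : Fin (m+3-2)) = ⟨jv, by omega⟩ :=
        Fin.ext (show jv - 1 + 1 = jv by omega)
      have ey : y ⟨jv - 1 + 1, by omega⟩ = y ⟨jv, by omega⟩ := congrArg y e2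
      omega

theorem stmt10 (n i : ℕ) (hn : 3 ≤ n) (hi : i ≤ n - 2) :
    Nat.card {p : (Fin (n - 1) → ℕ) × (Fin (n - 2) → ℕ) //
      (p.1 ⟨0, by omega⟩ + p.2 ⟨0, by omega⟩ = n - 2 - i) ∧
      (∀ d : ℕ, ∀ _h1 : 2 ≤ d, ∀ _h2 : d ≤ n - 2,
        p.1 ⟨d - 1, by omega⟩ + p.2 ⟨d - 2, by omega⟩ + p.2 ⟨d - 1, by omega⟩ = n - 1 - d) ∧
      (p.1 ⟨n - 2, by omega⟩ + p.2 ⟨n - 3, by omega⟩ = 0)} =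
    Nat.card {w : Fin n → Fin n //
      Function.Bijective w ∧ DownUp w ∧ ((w ⟨0, by omega⟩ : ℕ) = n - 1 - i)} := by
  obtain ⟨m, rfl⟩ : ∃ m, n = m + 3 := ⟨n - 3, by omega⟩
  have hi' : i ≤ m + 1 := by omega
  have hR : Nat.card {w : Fin (m+3) → Fin (m+3) //
      Function.Bijective w ∧ DownUp w ∧ ((w ⟨0, by omega⟩ : ℕ) = m + 3 - 1 - i)} =
      Ent (m + 3) (m + 2 - i) := Pcard (m+2) (m+2-i) (by omega)
  have hL := LHS_card m i hi'
  rw [hL, hR]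
  exact Ycard m i hi'
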